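/- arXiv:2307.15323 — 2 statements merged into one kernel-verified Lean document; each statement's English description precedes it below -/
import Mathlib

section
/- Let τ > 0. Then ∫₀^{1/√3} ∫_{√3v}^1 |u+iv|^{−1/2} e^{−uvτ} du dv ≲ τ^{−3/4}. -/
open MeasureTheory Real Set

private lemma inner_gamma (b : ℝ) (hb : 0 < b) :
    ∫ u in Ioi (0:ℝ), u ^ (-(1/2) : ℝ) * Real.exp (-b * u)
      = b ^ (-(1/2) : ℝ) * Real.Gamma (1/2) := by
  have h := integral_rpow_mul_exp_neg_mul_Ioi (a := 1/2) (r := b) (by norm_num) hb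
  rw [show (1/2 : ℝ) - 1 = -(1/2) by norm_num] at h
  simp_rw [neg_mul]
  rw [h, one_div, Real.inv_rpow hb.le, ← Real.rpow_neg hb.le]

private lemma inner_integrable (b : ℝ) (hb : 0 < b) :
    IntegrableOn (fun u : ℝ => u ^ (-(1/2) : ℝ) * Real.exp (-b * u)) (Ioi 0) := by
  have h := integrableOn_rpow_mul_exp_neg_mul_rpow (s := -(1/2)) (p := 1) (b := b)
    (by norm_num) zero_lt_one hb
  exact h.congr_fun (fun x hx => by simp only [Real.rpow_one]) measurableSet_Ioi

private lemma gauss_gamma (b : ℝ) (hb : 0 < b) :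
    ∫ v in Ioi (0:ℝ), v ^ (-(1/2) : ℝ) * Real.exp (-b * v ^ (2:ℝ))
      = b ^ (-(1/4) : ℝ) * (1/2) * Real.Gamma (1/4) := by
  have h := integral_rpow_mul_exp_neg_mul_rpow (p := 2) (q := -(1/2)) (b := b)
    (by norm_num) (by norm_num) hb
  rw [h]
  norm_num

/-- Model ∂̄-region estimate: integrating `|ζ|^{−1/2}` against `e^{−uvτ}` over
the truncated sector `0 ≤ v ≤ 1/√3`, `√3 v ≤ u ≤ 1` gives decay `τ^{−3/4}`,
with an absolute implied constant. -/
theorem stmt_16 :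
    ∃ C : ℝ, 0 < C ∧ ∀ τ : ℝ, 0 < τ →
      (∫ v in Set.Ioo (0 : ℝ) (1 / Real.sqrt 3),
        ∫ u in Set.Ioo (Real.sqrt 3 * v) 1,
          (u ^ 2 + v ^ 2) ^ (-(1 / 4) : ℝ) * Real.exp (-(u * v * τ)))
        ≤ C * τ ^ (-(3 / 4) : ℝ) := by
  have sqrt3_pos : (0:ℝ) < Real.sqrt 3 := Real.sqrt_pos.2 (by norm_num)
  refine ⟨Real.Gamma (1/2) * ((Real.sqrt 3 / 2) ^ (-(1/4):ℝ) * (1/2) * Real.Gamma (1/4))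
      * (2:ℝ) ^ ((1/2):ℝ), by positivity, ?_⟩
  intro τ hτ
  set b : ℝ := Real.sqrt 3 * τ / 2 with hbdef
  have hb : 0 < b := by positivity
  -- the outer dominating function
  set G : ℝ → ℝ := fun v =>
    Real.Gamma (1/2) * (τ/2) ^ (-(1/2):ℝ) * (v ^ (-(1/2):ℝ) * Real.exp (-b * v ^ (2:ℝ)))
    with hGdef
  have hGint : IntegrableOn G (Ioi 0) := by
    have := integrableOn_rpow_mul_exp_neg_mul_rpow (s := -(1/2)) (p := 2) (b := b)
      (by norm_num) two_pos hb
    exact this.const_mul _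
  -- step 1: inner bound, pointwise in v
  have hinner : ∀ v ∈ Ioo (0:ℝ) (1 / Real.sqrt 3),
      (∫ u in Set.Ioo (Real.sqrt 3 * v) 1,
        (u ^ 2 + v ^ 2) ^ (-(1 / 4) : ℝ) * Real.exp (-(u * v * τ))) ≤ G v := by
    intro v hv
    obtain ⟨hv0, hv1⟩ := hv
    have hvτ : 0 < v * τ / 2 := by positivity
    set g : ℝ → ℝ := fun u =>
      u ^ (-(1/2):ℝ) * Real.exp (-(v*τ/2) * u) * Real.exp (-b * v ^ (2:ℝ)) with hgdef
    have hgint : IntegrableOn g (Ioi 0) := (inner_integrable _ hvτ).mul_const _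
    have hgnonneg : ∀ u ∈ Ioi (0:ℝ), 0 ≤ g u := fun u hu => by
      have : (0:ℝ) < u := hu
      simp only [hgdef]; positivity
    have step1 : (∫ u in Set.Ioo (Real.sqrt 3 * v) 1,
        (u ^ 2 + v ^ 2) ^ (-(1 / 4) : ℝ) * Real.exp (-(u * v * τ)))
        ≤ ∫ u in Set.Ioo (Real.sqrt 3 * v) 1, g u := by
      have hsub : Ioo (Real.sqrt 3 * v) 1 ⊆ Ioi (0:ℝ) :=
        fun x hx => (mul_pos sqrt3_pos hv0).trans hx.1
      refine integral_mono_of_nonneg (Filter.Eventually.of_forall fun u => by positivity)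
        (hgint.mono_set hsub)
        (ae_restrict_of_forall_mem measurableSet_Ioo fun u hu => ?_)
      obtain ⟨hu0, hu1⟩ := hu
      have hupos : 0 < u := (mul_pos sqrt3_pos hv0).trans hu0
      have h1 : (u ^ 2 + v ^ 2) ^ (-(1 / 4) : ℝ) ≤ u ^ (-(1/2):ℝ) := by
        have hle : (u^2:ℝ) ≤ u^2 + v^2 := by nlinarith [sq_nonneg v]
        have := Real.rpow_le_rpow_of_nonpos (by positivity : (0:ℝ) < u^2) hle
          (by norm_num : (-(1/4):ℝ) ≤ 0)
        calc (u ^ 2 + v ^ 2) ^ (-(1 / 4) : ℝ) ≤ (u^2 : ℝ) ^ (-(1/4):ℝ) := this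
          _ = u ^ (-(1/2):ℝ) := by
            rw [← Real.rpow_natCast u 2, ← Real.rpow_mul hupos.le]; norm_num
      have h2 : Real.exp (-(u * v * τ)) ≤
          Real.exp (-(v*τ/2) * u) * Real.exp (-b * v ^ (2:ℝ)) := by
        rw [← Real.exp_add, Real.exp_le_exp, Real.rpow_two, hbdef]
        nlinarith [mul_nonneg (mul_nonneg (sub_nonneg.2 hu0.le) hv0.le) hτ.le]
      calc (u ^ 2 + v ^ 2) ^ (-(1 / 4) : ℝ) * Real.exp (-(u * v * τ))
          ≤ u ^ (-(1/2):ℝ) * (Real.exp (-(v*τ/2) * u) * Real.exp (-b * v ^ (2:ℝ))) :=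
            mul_le_mul h1 h2 (Real.exp_pos _).le (by positivity)
        _ = g u := by rw [hgdef]; ring
    have step2 : (∫ u in Set.Ioo (Real.sqrt 3 * v) 1, g u) ≤ ∫ u in Ioi (0:ℝ), g u := by
      have hsub : Ioo (Real.sqrt 3 * v) 1 ⊆ Ioi (0:ℝ) :=
        fun x hx => (mul_pos sqrt3_pos hv0).trans hx.1
      exact setIntegral_mono_set hgint
        (ae_restrict_of_forall_mem measurableSet_Ioi hgnonneg) hsub.eventuallyLE
    have step3 : (∫ u in Ioi (0:ℝ), g u) = G v := by
      simp only [hgdef]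
      rw [MeasureTheory.integral_mul_const, inner_gamma _ hvτ]
      have : ((v*τ/2:ℝ)) ^ (-(1/2):ℝ) = v ^ (-(1/2):ℝ) * (τ/2) ^ (-(1/2):ℝ) := by
        rw [show (v*τ/2 : ℝ) = v * (τ/2) by ring,
          Real.mul_rpow hv0.le (by positivity)]
      rw [this, hGdef]; ring
    exact step1.trans (step2.trans_eq step3)
  -- step 2: outer bound
  have houter : (∫ v in Set.Ioo (0 : ℝ) (1 / Real.sqrt 3),
      ∫ u in Set.Ioo (Real.sqrt 3 * v) 1,
        (u ^ 2 + v ^ 2) ^ (-(1 / 4) : ℝ) * Real.exp (-(u * v * τ)))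
      ≤ ∫ v in Set.Ioo (0 : ℝ) (1 / Real.sqrt 3), G v := by
    refine integral_mono_of_nonneg
      (Filter.Eventually.of_forall fun v => integral_nonneg fun u => by positivity)
      (hGint.mono_set (fun x hx => hx.1))
      (ae_restrict_of_forall_mem measurableSet_Ioo hinner)
  have hGnonneg : ∀ v ∈ Ioi (0:ℝ), 0 ≤ G v := fun v hv => by
    have : (0:ℝ) < v := hv
    simp only [hGdef]; positivity
  have hmono : (∫ v in Set.Ioo (0 : ℝ) (1 / Real.sqrt 3), G v) ≤ ∫ v in Ioi (0:ℝ), G v := by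
    have hsub : Ioo (0:ℝ) (1 / Real.sqrt 3) ⊆ Ioi (0:ℝ) := fun x hx => hx.1
    exact setIntegral_mono_set hGint
      (ae_restrict_of_forall_mem measurableSet_Ioi hGnonneg) hsub.eventuallyLE
  have hval : (∫ v in Ioi (0:ℝ), G v)
      = Real.Gamma (1/2) * (τ/2) ^ (-(1/2):ℝ)
        * (b ^ (-(1/4):ℝ) * (1/2) * Real.Gamma (1/4)) := by
    simp only [hGdef]
    rw [MeasureTheory.integral_const_mul, gauss_gamma _ hb]
  have e1 : (τ/2:ℝ) ^ (-(1/2):ℝ) = τ ^ (-(1/2):ℝ) * (2:ℝ) ^ ((1/2):ℝ) := by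
    rw [Real.div_rpow hτ.le (by norm_num : (0:ℝ) ≤ 2), div_eq_mul_inv,
      ← Real.rpow_neg (by norm_num : (0:ℝ) ≤ 2)]
    norm_num
  have e2 : b ^ (-(1/4):ℝ) = τ ^ (-(1/4):ℝ) * (Real.sqrt 3 / 2) ^ (-(1/4):ℝ) := by
    rw [hbdef, show (Real.sqrt 3 * τ / 2 : ℝ) = τ * (Real.sqrt 3 / 2) by ring,
      Real.mul_rpow hτ.le (by positivity)]
  have e3 : τ ^ (-(1/2):ℝ) * τ ^ (-(1/4):ℝ) = τ ^ (-(3/4):ℝ) := by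
    rw [← Real.rpow_add hτ]; norm_num
  calc (∫ v in Set.Ioo (0 : ℝ) (1 / Real.sqrt 3),
        ∫ u in Set.Ioo (Real.sqrt 3 * v) 1,
          (u ^ 2 + v ^ 2) ^ (-(1 / 4) : ℝ) * Real.exp (-(u * v * τ)))
      ≤ ∫ v in Ioi (0:ℝ), G v := houter.trans hmono
    _ = Real.Gamma (1/2) * ((Real.sqrt 3 / 2) ^ (-(1/4):ℝ) * (1/2) * Real.Gamma (1/4))
        * (2:ℝ) ^ ((1/2):ℝ) * τ ^ (-(3/4) : ℝ) := by
        rw [hval, e1, e2, ← e3]; ring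
    _ ≤ _ := le_of_eq (by norm_num)
end

section
/- Let τ > 0, β ≥ 0, p > 2 and q with 1/p + 1/q = 1. Then ∫₀^∞ e^{−vτ} v^{1/p − 1/2} |v − β|^{1/q − 1} dv ≲ τ^{−1/2}, with implied constant depending only on p (and uniform in β ≥ 0). -/
/-!
Write `s = 1/p`, so that `1/q - 1 = -s` and the integrand is
`e^{-vτ} v^{s - 1/2} |v - β|^{-s}` with `0 < s ≤ 1/2`; split the integral at `v = β`.
On `(0, β]` use `e^{-vτ} ≤ (vτ)^{-1/2}`: what remains is `τ^{-1/2} v^{s-1} (β - v)^{-s}`, and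
`∫₀^β v^{s-1} (β - v)^{-s} dv` is invariant under `v = βw`, hence equals the Beta value
`B(s, 1 - s)`. On `(β, ∞)` both exponents are nonpositive and `v ≥ v - β`, so the integrand is at
most `e^{-(v-β)τ} (v - β)^{-1/2}`, whose integral is `Γ(1/2) τ^{-1/2} = √(π/τ)`.
-/

open MeasureTheory Set Real

lemma exp_neg_le_rpow_neg_one_half {x : ℝ} (hx : 0 < x) : exp (-x) ≤ x ^ (-(1 / 2) : ℝ) := by
  rw [exp_neg, rpow_neg hx.le, ← sqrt_eq_rpow]
  refine inv_anti₀ (sqrt_pos.2 hx) ?_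
  have h : √x ≤ x + 1 := sqrt_le_iff.2 ⟨by positivity, by nlinarith⟩
  linarith [add_one_le_exp x]

lemma intervalIntegrable_rpow_mul_one_sub_rpow {s t : ℝ} (hs : 0 < s) (ht : 0 < t) :
    IntervalIntegrable (fun x : ℝ => x ^ (s - 1) * (1 - x) ^ (t - 1)) volume 0 1 := by
  refine (Complex.betaIntegral_convergent (u := s) (v := t) (by simpa) (by simpa)).norm.congr
    fun x hx => ?_
  rw [uIoc_of_le zero_le_one] at hx
  have h1 : (0 : ℝ) ≤ 1 - x := by linarith [hx.2]
  have hcast : ((x ^ (s - 1) * (1 - x) ^ (t - 1) : ℝ) : ℂ)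
      = (x : ℂ) ^ ((s : ℂ) - 1) * (1 - (x : ℂ)) ^ ((t : ℂ) - 1) := by
    push_cast [Complex.ofReal_cpow hx.1.le, Complex.ofReal_cpow h1]
    rfl
  rw [← hcast, Complex.norm_real,
    norm_of_nonneg (mul_nonneg (rpow_nonneg hx.1.le _) (rpow_nonneg h1 _))]

lemma integral_rpow_mul_one_sub_rpow_nonneg {a b : ℝ} :
    0 ≤ ∫ x in 0..1, x ^ a * (1 - x) ^ b :=
  intervalIntegral.integral_nonneg zero_le_one
    fun x hx => mul_nonneg (rpow_nonneg hx.1 _) (rpow_nonneg (by linarith [hx.2]) _)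

lemma rpow_mul_sub_rpow_eq {s t β v : ℝ} (hβ : 0 < β) (hv : 0 ≤ v) (hvβ : v ≤ β) :
    v ^ (s - 1) * (β - v) ^ (t - 1)
      = β ^ (s + t - 2) * ((β⁻¹ * v) ^ (s - 1) * (1 - β⁻¹ * v) ^ (t - 1)) := by
  have h1 : 1 - β⁻¹ * v = β⁻¹ * (β - v) := by field_simp
  rw [h1, mul_rpow (inv_nonneg.2 hβ.le) hv, mul_rpow (inv_nonneg.2 hβ.le) (by linarith),
    inv_rpow hβ.le, inv_rpow hβ.le, ← rpow_neg hβ.le, ← rpow_neg hβ.le]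
  have h2 : β ^ (s + t - 2) * β ^ (-(s - 1)) * β ^ (-(t - 1)) = 1 := by
    rw [← rpow_add hβ, ← rpow_add hβ, show s + t - 2 + -(s - 1) + -(t - 1) = 0 by ring, rpow_zero]
  linear_combination (-(v ^ (s - 1) * (β - v) ^ (t - 1))) * h2

lemma intervalIntegrable_rpow_mul_sub_rpow {s t β : ℝ} (hs : 0 < s) (ht : 0 < t) (hβ : 0 < β) :
    IntervalIntegrable (fun v : ℝ => v ^ (s - 1) * (β - v) ^ (t - 1)) volume 0 β := by
  have h := ((intervalIntegrable_rpow_mul_one_sub_rpow hs ht).comp_mul_left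
    (c := β⁻¹)).const_mul (β ^ (s + t - 2))
  rw [zero_div, one_div, inv_inv] at h
  refine h.congr fun v hv => ?_
  rw [uIoc_of_le hβ.le] at hv
  exact (rpow_mul_sub_rpow_eq hβ hv.1.le hv.2).symm

lemma integral_rpow_mul_sub_rpow {s t β : ℝ} (hβ : 0 < β) :
    ∫ v in 0..β, v ^ (s - 1) * (β - v) ^ (t - 1)
      = β ^ (s + t - 1) * ∫ x in 0..1, x ^ (s - 1) * (1 - x) ^ (t - 1) := by
  rw [intervalIntegral.integral_congr fun v hv => rpow_mul_sub_rpow_eq (s := s) (t := t) hβ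
      (uIcc_of_le hβ.le ▸ hv).1 (uIcc_of_le hβ.le ▸ hv).2,
    intervalIntegral.integral_const_mul,
    intervalIntegral.integral_comp_mul_left (fun x => x ^ (s - 1) * (1 - x) ^ (t - 1))
      (inv_ne_zero hβ.ne'),
    mul_zero, inv_mul_cancel₀ hβ.ne', inv_inv, smul_eq_mul, ← mul_assoc, ← rpow_add_one hβ.ne']
  ring_nf

lemma integrableOn_Ioi_comp_sub_iff {E : Type*} [NormedAddCommGroup E] (f : ℝ → E) (a : ℝ) :
    IntegrableOn (fun x => f (x - a)) (Ioi a) ↔ IntegrableOn f (Ioi 0) := by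
  simpa [Function.comp_def] using (measurePreserving_sub_right volume a).integrableOn_comp_preimage
    (measurableEmbedding_subRight a) (f := f) (s := Ioi 0)

lemma setIntegral_Ioi_comp_sub {E : Type*} [NormedAddCommGroup E] [NormedSpace ℝ E]
    (f : ℝ → E) (a : ℝ) :
    ∫ x in Ioi a, f (x - a) = ∫ x in Ioi 0, f x := by
  simpa using (measurePreserving_sub_right volume a).setIntegral_preimage_emb
    (measurableEmbedding_subRight a) f (Ioi 0)

lemma integrableOn_rpow_neg_one_half_mul_exp_neg_mul {τ : ℝ} (hτ : 0 < τ) :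
    IntegrableOn (fun u : ℝ => u ^ (-(1 / 2) : ℝ) * exp (-(τ * u))) (Ioi 0) := by
  simpa using integrableOn_rpow_mul_exp_neg_mul_rpow (by norm_num : (-1 : ℝ) < -(1 / 2))
    zero_lt_one hτ

lemma integral_rpow_neg_one_half_mul_exp_neg_mul {τ : ℝ} (hτ : 0 < τ) :
    ∫ u in Ioi 0, u ^ (-(1 / 2) : ℝ) * exp (-(τ * u)) = √π * τ ^ (-(1 / 2) : ℝ) := by
  have h := integral_rpow_mul_exp_neg_mul_Ioi (by norm_num : (0 : ℝ) < 1 / 2) hτ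
  rw [Gamma_one_half_eq, one_div τ, inv_rpow hτ.le, ← rpow_neg hτ.le] at h
  norm_num at h
  rw [h, mul_comm]

lemma integrableOn_Ioc_rpow_mul_sub_rpow_neg {s β : ℝ} (hs0 : 0 < s) (hs1 : s < 1) (hβ : 0 ≤ β) :
    IntegrableOn (fun v : ℝ => v ^ (s - 1) * (β - v) ^ (-s)) (Ioc 0 β) := by
  rcases hβ.eq_or_lt with rfl | hβ
  · simp
  rw [← intervalIntegrable_iff_integrableOn_Ioc_of_le hβ.le]
  simpa using intervalIntegrable_rpow_mul_sub_rpow (t := 1 - s) hs0 (by linarith) hβ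

lemma setIntegral_Ioc_rpow_mul_sub_rpow_neg {s β : ℝ} (hβ : 0 < β) :
    ∫ v in Ioc 0 β, v ^ (s - 1) * (β - v) ^ (-s) = ∫ x in 0..1, x ^ (s - 1) * (1 - x) ^ (-s) := by
  simpa [intervalIntegral.integral_of_le hβ.le] using
    integral_rpow_mul_sub_rpow (s := s) (t := 1 - s) hβ

noncomputable def singularLaplaceKernel (τ β s v : ℝ) : ℝ :=
  exp (-(v * τ)) * v ^ (s - 1 / 2) * |v - β| ^ (-s)

section SingularLaplaceKernel

variable {τ β s : ℝ}

lemma measurable_singularLaplaceKernel : Measurable (singularLaplaceKernel τ β s) := by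
  unfold singularLaplaceKernel
  fun_prop

lemma singularLaplaceKernel_nonneg {v : ℝ} (hv : 0 ≤ v) : 0 ≤ singularLaplaceKernel τ β s v := by
  unfold singularLaplaceKernel
  have := rpow_nonneg hv (s - 1 / 2)
  positivity

lemma singularLaplaceKernel_le_of_mem_Ioc (hτ : 0 < τ) {v : ℝ} (hv : v ∈ Ioc 0 β) :
    singularLaplaceKernel τ β s v ≤ τ ^ (-(1 / 2) : ℝ) * (v ^ (s - 1) * (β - v) ^ (-s)) := by
  obtain ⟨hv0, hvβ⟩ := hv
  have hexp : exp (-(v * τ)) ≤ τ ^ (-(1 / 2) : ℝ) * v ^ (-(1 / 2) : ℝ) := by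
    rw [← mul_rpow hτ.le hv0.le, mul_comm τ]
    exact exp_neg_le_rpow_neg_one_half (by positivity)
  have hpow : v ^ (-(1 / 2) : ℝ) * v ^ (s - 1 / 2) = v ^ (s - 1) := by
    rw [← rpow_add hv0]; ring_nf
  rw [singularLaplaceKernel, abs_of_nonpos (by linarith), neg_sub]
  calc exp (-(v * τ)) * v ^ (s - 1 / 2) * (β - v) ^ (-s)
      ≤ τ ^ (-(1 / 2) : ℝ) * v ^ (-(1 / 2) : ℝ) * v ^ (s - 1 / 2) * (β - v) ^ (-s) := by gcongr
    _ = τ ^ (-(1 / 2) : ℝ) * (v ^ (s - 1) * (β - v) ^ (-s)) := by rw [← hpow]; ring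

lemma singularLaplaceKernel_le_of_mem_Ioi (hτ : 0 ≤ τ) (hβ : 0 ≤ β) (hs : s ≤ 1 / 2) {v : ℝ}
    (hv : v ∈ Ioi β) :
    singularLaplaceKernel τ β s v ≤ (v - β) ^ (-(1 / 2) : ℝ) * exp (-(τ * (v - β))) := by
  have hvβ : 0 < v - β := sub_pos.2 hv
  have hexp : exp (-(v * τ)) ≤ exp (-(τ * (v - β))) := exp_le_exp.2 (by nlinarith)
  have hpow : v ^ (s - 1 / 2) ≤ (v - β) ^ (s - 1 / 2) :=
    rpow_le_rpow_of_nonpos hvβ (by linarith) (by linarith)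
  have hsum : (v - β) ^ (s - 1 / 2) * (v - β) ^ (-s) = (v - β) ^ (-(1 / 2) : ℝ) := by
    rw [← rpow_add hvβ]; ring_nf
  rw [singularLaplaceKernel, abs_of_pos hvβ]
  calc exp (-(v * τ)) * v ^ (s - 1 / 2) * (v - β) ^ (-s)
      ≤ exp (-(τ * (v - β))) * (v - β) ^ (s - 1 / 2) * (v - β) ^ (-s) := by
        gcongr
        exact rpow_nonneg (by linarith) _
    _ = (v - β) ^ (-(1 / 2) : ℝ) * exp (-(τ * (v - β))) := by rw [mul_assoc, hsum, mul_comm]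

lemma integrableOn_Ioc_singularLaplaceKernel (hτ : 0 < τ) (hβ : 0 ≤ β) (hs0 : 0 < s)
    (hs1 : s < 1) : IntegrableOn (singularLaplaceKernel τ β s) (Ioc 0 β) :=
  ((integrableOn_Ioc_rpow_mul_sub_rpow_neg hs0 hs1 hβ).const_mul _).mono'
    measurable_singularLaplaceKernel.aestronglyMeasurable <|
    ae_restrict_of_forall_mem measurableSet_Ioc fun v hv => by
      rw [norm_of_nonneg (singularLaplaceKernel_nonneg hv.1.le)]
      exact singularLaplaceKernel_le_of_mem_Ioc hτ hv

lemma setIntegral_Ioc_singularLaplaceKernel_le (hτ : 0 < τ) (hβ : 0 ≤ β) (hs0 : 0 < s)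
    (hs1 : s < 1) :
    ∫ v in Ioc 0 β, singularLaplaceKernel τ β s v
      ≤ τ ^ (-(1 / 2) : ℝ) * ∫ x in 0..1, x ^ (s - 1) * (1 - x) ^ (-s) := by
  have hbound := setIntegral_mono_on (integrableOn_Ioc_singularLaplaceKernel hτ hβ hs0 hs1)
    ((integrableOn_Ioc_rpow_mul_sub_rpow_neg hs0 hs1 hβ).const_mul _) measurableSet_Ioc
    fun v hv => singularLaplaceKernel_le_of_mem_Ioc hτ hv
  rw [integral_const_mul] at hbound
  rcases hβ.eq_or_lt with rfl | hβ
  · simp only [Ioc_self, Measure.restrict_empty, integral_zero_measure]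
    exact mul_nonneg (rpow_nonneg hτ.le _) integral_rpow_mul_one_sub_rpow_nonneg
  · rwa [setIntegral_Ioc_rpow_mul_sub_rpow_neg hβ] at hbound

lemma integrableOn_Ioi_singularLaplaceKernel (hτ : 0 < τ) (hβ : 0 ≤ β) (hs : s ≤ 1 / 2) :
    IntegrableOn (singularLaplaceKernel τ β s) (Ioi β) :=
  ((integrableOn_Ioi_comp_sub_iff _ β).2 (integrableOn_rpow_neg_one_half_mul_exp_neg_mul hτ)).mono'
    measurable_singularLaplaceKernel.aestronglyMeasurable <|
    ae_restrict_of_forall_mem measurableSet_Ioi fun v hv => by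
      rw [norm_of_nonneg (singularLaplaceKernel_nonneg (hβ.trans hv.le))]
      exact singularLaplaceKernel_le_of_mem_Ioi hτ.le hβ hs hv

lemma setIntegral_Ioi_singularLaplaceKernel_le (hτ : 0 < τ) (hβ : 0 ≤ β) (hs : s ≤ 1 / 2) :
    ∫ v in Ioi β, singularLaplaceKernel τ β s v ≤ √π * τ ^ (-(1 / 2) : ℝ) := by
  rw [← integral_rpow_neg_one_half_mul_exp_neg_mul hτ,
    ← setIntegral_Ioi_comp_sub (fun u => u ^ (-(1 / 2) : ℝ) * exp (-(τ * u))) β]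
  exact setIntegral_mono_on (integrableOn_Ioi_singularLaplaceKernel hτ hβ hs)
    ((integrableOn_Ioi_comp_sub_iff _ β).2 (integrableOn_rpow_neg_one_half_mul_exp_neg_mul hτ))
    measurableSet_Ioi fun v hv => singularLaplaceKernel_le_of_mem_Ioi hτ.le hβ hs hv

theorem setIntegral_Ioi_singularLaplaceKernel_le_rpow_neg_one_half (hτ : 0 < τ) (hβ : 0 ≤ β)
    (hs0 : 0 < s) (hs : s ≤ 1 / 2) :
    ∫ v in Ioi 0, singularLaplaceKernel τ β s v
      ≤ ((∫ x in 0..1, x ^ (s - 1) * (1 - x) ^ (-s)) + √π) * τ ^ (-(1 / 2) : ℝ) := by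
  have hs1 : s < 1 := by linarith
  rw [← Ioc_union_Ioi_eq_Ioi hβ, setIntegral_union Ioc_disjoint_Ioi_same measurableSet_Ioi
    (integrableOn_Ioc_singularLaplaceKernel hτ hβ hs0 hs1)
    (integrableOn_Ioi_singularLaplaceKernel hτ hβ hs)]
  linarith [setIntegral_Ioc_singularLaplaceKernel_le hτ hβ hs0 hs1,
    setIntegral_Ioi_singularLaplaceKernel_le hτ hβ hs]

end SingularLaplaceKernel

/-- Singular-weight Laplace integral estimate: for `p > 2`, `1/p + 1/q = 1`,
`∫₀^∞ e^{−vτ} v^{1/p − 1/2} |v − β|^{1/q − 1} dv ≲ τ^{−1/2}` with constant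
depending only on `p`, uniformly in `β ≥ 0`. -/
theorem stmt_18 (p q : ℝ) (hp : 2 < p) (hpq : 1 / p + 1 / q = 1) :
    ∃ C : ℝ, 0 < C ∧ ∀ τ : ℝ, 0 < τ → ∀ β : ℝ, 0 ≤ β →
      (∫ v in Set.Ioi (0 : ℝ),
        Real.exp (-(v * τ)) * v ^ (1 / p - 1 / 2) * |v - β| ^ (1 / q - 1))
      ≤ C * τ ^ (-(1 / 2) : ℝ) := by
  have hp0 : 0 < 1 / p := by positivity
  have hp2 : 1 / p ≤ 1 / 2 := one_div_le_one_div_of_le two_pos hp.le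
  have hq : 1 / q - 1 = -(1 / p) := by linarith
  refine ⟨(∫ x in 0..1, x ^ (1 / p - 1) * (1 - x) ^ (-(1 / p))) + √π,
    add_pos_of_nonneg_of_pos integral_rpow_mul_one_sub_rpow_nonneg (sqrt_pos.2 pi_pos),
    fun τ hτ β hβ => ?_⟩
  rw [hq]
  exact setIntegral_Ioi_singularLaplaceKernel_le_rpow_neg_one_half hτ hβ hp0 hp2
end
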